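/- Let n ≥ 2, let P_n be the path graph on n vertices 1,…,n, let L be its Laplacian, and let L⁺ be the Moore–Penrose pseudoinverse of L. Then for every vertex j ∈ {1,…,n}, L⁺_{j,j} = ((n − j)(n − j + 1) + j(j − 1))/(2n) − (n² − 1)/(6n). -/

import Mathlib

/-!
The candidate is the paper's formula `M a b = -|a - b| / 2 + (R a + R b) / (2n) - K_f / n²`, where
`R a = ∑ c, |a - c|` and `K_f = n (n² - 1) / 6`. As a function of `a` its second difference is
`δ_ab - 1/n`, and extended to `a = -1` and `a = n` it satisfies the reflecting conditions
`M (-1) b = M 0 b`, `M n b = M (n - 1) b`; these turn the degree-one boundary rows of `L` into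
second differences too, so `L M = I - J/n`. Since the rows of `L` and of `M` sum to zero, `M`
satisfies the four Penrose conditions, and the Moore–Penrose inverse is unique.
-/

open Matrix

structure IsMoorePenroseInverse {R : Type*} [Mul R] [Star R] (a x : R) : Prop where
  penrose₁ : a * x * a = a
  penrose₂ : x * a * x = x
  penrose₃ : star (a * x) = a * x
  penrose₄ : star (x * a) = x * a

theorem IsMoorePenroseInverse.unique {R : Type*} [Semigroup R] [StarMul R] {a x y : R}
    (hx : IsMoorePenroseInverse a x) (hy : IsMoorePenroseInverse a y) : x = y := by
  have hleft : a * x = a * y := calc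
    a * x = star (a * x) := hx.penrose₃.symm
    _ = star (a * y * (a * x)) := by rw [← mul_assoc, hy.penrose₁]
    _ = a * x * (a * y) := by rw [star_mul, hx.penrose₃, hy.penrose₃]
    _ = a * y := by rw [← mul_assoc, hx.penrose₁]
  have hright : x * a = y * a := calc
    x * a = star (x * a) := hx.penrose₄.symm
    _ = star (x * (a * y * a)) := by rw [hy.penrose₁]
    _ = star (x * a * (y * a)) := by simp only [mul_assoc]
    _ = y * a * (x * a) := by rw [star_mul, hx.penrose₄, hy.penrose₄]
    _ = y * (a * x * a) := by simp only [mul_assoc]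
    _ = y * a := by rw [hx.penrose₁]
  calc x = x * (a * x) := by rw [← mul_assoc, hx.penrose₂]
    _ = x * a * y := by rw [hleft, mul_assoc]
    _ = y := by rw [hright, hy.penrose₂]

theorem Matrix.isMoorePenroseInverse_of_transpose {m R : Type*} [Fintype m] [CommSemiring R]
    [StarRing R] [TrivialStar R] {A X : Matrix m m R} (h₁ : A * X * A = A) (h₂ : X * A * X = X)
    (h₃ : (A * X)ᵀ = A * X) (h₄ : (X * A)ᵀ = X * A) : IsMoorePenroseInverse A X where
  penrose₁ := h₁
  penrose₂ := h₂
  penrose₃ := by rwa [star_eq_conjTranspose, conjTranspose_eq_transpose_of_trivial]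
  penrose₄ := by rwa [star_eq_conjTranspose, conjTranspose_eq_transpose_of_trivial]

theorem Fin.sum_univ_eq_sum_Ico_int {M : Type*} [AddCommMonoid M] (n : ℕ) (f : ℤ → M) :
    ∑ j : Fin n, f j = ∑ c ∈ Finset.Ico (0 : ℤ) n, f c := by
  rw [Fin.sum_univ_eq_sum_range (fun k : ℕ => f k), Int.Ico_eq_finset_map, Finset.sum_map]
  simp

def pathLaplacian (n : ℕ) : Matrix (Fin n) (Fin n) ℝ :=
  of fun i j => if i = j then (if i.val = 0 ∨ i.val = n - 1 then 1 else 2)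
    else if i.val + 1 = j.val ∨ j.val + 1 = i.val then -1 else 0

theorem pathLaplacian_transpose (n : ℕ) : (pathLaplacian n)ᵀ = pathLaplacian n := by
  ext i j
  simp only [transpose_apply, pathLaplacian, of_apply, Fin.ext_iff]
  split_ifs <;> first | rfl | (exfalso; omega)

theorem sum_pathLaplacian_mul {n : ℕ} (hn : 2 ≤ n) (g : ℤ → ℝ) (hg₀ : g (-1) = g 0)
    (hgₙ : g n = g (n - 1)) (i : Fin n) :
    ∑ j, pathLaplacian n i j * g j = 2 * g i - g (i - 1) - g (i + 1) := by
  let F : ℤ → ℝ := fun c =>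
    (if c = i then (2 - (if i.val = 0 then 1 else 0) - (if i.val = n - 1 then 1 else 0)) * g c
      else 0) - (if c = i + 1 then g c else 0) - (if c = i - 1 then g c else 0)
  have hentry (j : Fin n) : pathLaplacian n i j * g j = F j := by
    simp only [F, pathLaplacian, of_apply, Fin.ext_iff]
    split_ifs <;> first | ring1 | (exfalso; omega)
  rw [Finset.sum_congr rfl fun j _ => hentry j, Fin.sum_univ_eq_sum_Ico_int n F]
  simp only [F, Finset.sum_sub_distrib, Finset.sum_ite_eq', Finset.mem_Ico]
  have hi := i.isLt
  have hleft (h : i.val = 0) : g ((i : ℤ) - 1) = g i := by simpa [h] using hg₀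
  have hright (h : i.val = n - 1) : g ((i : ℤ) + 1) = g i := by
    rw [show (i : ℤ) = n - 1 by omega, sub_add_cancel, hgₙ]
  split_ifs <;> first
    | (exfalso; omega)
    | ring1
    | linear_combination hleft (by omega)
    | linear_combination hright (by omega)

theorem Int.abs_sub_one_add_abs_add_one_sub_two_mul_abs (a b : ℤ) :
    |a - 1 - b| + |a + 1 - b| - 2 * |a - b| = if a = b then 2 else 0 := by
  simp only [abs_eq_max_neg]
  split_ifs <;> omega

/-- `∑ c < n, |a - c|` for `0 ≤ a < n` (see `sum_range_abs_sub`), as a polynomial in `a`. -/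
noncomputable def pathDistSum (n : ℕ) (a : ℤ) : ℝ := ((n - a - 1) * (n - a) + a * (a + 1)) / 2

noncomputable def pathPinvEntry (n : ℕ) (a b : ℤ) : ℝ :=
  -|(a : ℝ) - b| / 2 + (pathDistSum n a + pathDistSum n b) / (2 * n) - (n ^ 2 - 1) / (6 * n)

theorem pathPinvEntry_comm (n : ℕ) (a b : ℤ) : pathPinvEntry n a b = pathPinvEntry n b a := by
  rw [pathPinvEntry, pathPinvEntry, abs_sub_comm, add_comm (pathDistSum n a)]

noncomputable def pathPinv (n : ℕ) : Matrix (Fin n) (Fin n) ℝ :=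
  of fun i j => pathPinvEntry n i j

theorem pathPinv_transpose (n : ℕ) : (pathPinv n)ᵀ = pathPinv n := by
  ext i j
  exact pathPinvEntry_comm n j i

theorem pathPinvEntry_second_diff (n : ℕ) (a b : ℤ) :
    2 * pathPinvEntry n a b - pathPinvEntry n (a - 1) b - pathPinvEntry n (a + 1) b =
      (if a = b then 1 else 0) - (n : ℝ)⁻¹ := by
  have habs : |(a : ℝ) - 1 - b| + |(a : ℝ) + 1 - b| - 2 * |(a : ℝ) - b| =
      if a = b then 2 else 0 := by
    exact_mod_cast Int.abs_sub_one_add_abs_add_one_sub_two_mul_abs a b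
  have hdist : 2 * pathDistSum n a - pathDistSum n (a - 1) - pathDistSum n (a + 1) = -2 := by
    simp only [pathDistSum]; push_cast; ring
  simp only [pathPinvEntry]
  push_cast
  split_ifs at habs ⊢ <;> linear_combination habs / 2 + hdist / (2 * n)

theorem pathPinvEntry_neg_one_eq_zero {n : ℕ} (hn : n ≠ 0) {b : ℤ} (hb : 0 ≤ b) :
    pathPinvEntry n (-1) b = pathPinvEntry n 0 b := by
  have hn' : (n : ℝ) ≠ 0 := by exact_mod_cast hn
  have hb' : (0 : ℝ) ≤ b := by exact_mod_cast hb
  simp only [pathPinvEntry, pathDistSum]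
  rw [abs_of_nonpos (by push_cast; linarith), abs_of_nonpos (by push_cast; linarith)]
  field_simp
  push_cast
  ring

theorem pathPinvEntry_natCast_eq_sub_one {n : ℕ} (hn : n ≠ 0) {b : ℤ} (hb : b < n) :
    pathPinvEntry n n b = pathPinvEntry n (n - 1) b := by
  have hn' : (n : ℝ) ≠ 0 := by exact_mod_cast hn
  have hb' : (b : ℝ) ≤ n - 1 := by
    have : b ≤ n - 1 := by omega
    exact_mod_cast this
  simp only [pathPinvEntry, pathDistSum]
  rw [abs_of_nonneg (by push_cast; linarith), abs_of_nonneg (by push_cast; linarith)]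
  field_simp
  push_cast
  ring

theorem sum_range_abs_sub {a m : ℕ} (h : a ≤ m) :
    ∑ c ∈ Finset.range m, |(a : ℝ) - c| = pathDistSum m a := by
  induction m, h using Nat.le_induction with
  | base =>
    induction a with
    | zero => simp [pathDistSum]
    | succ a ih =>
      rw [Finset.sum_range_succ']
      simp only [Nat.cast_succ, add_sub_add_right_eq_sub, ih, Nat.cast_zero, sub_zero]
      rw [abs_of_nonneg (by positivity), pathDistSum, pathDistSum]
      push_cast
      ring
  | succ m hm ih =>
    rw [Finset.sum_range_succ, ih, abs_of_nonpos (sub_nonpos.mpr (by exact_mod_cast hm)),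
      pathDistSum, pathDistSum]
    push_cast
    ring

theorem sum_range_pathDistSum (n : ℕ) :
    ∑ a ∈ Finset.range n, pathDistSum n a = n * (n ^ 2 - 1) / 3 := by
  have hpartial (m : ℕ) : ∑ a ∈ Finset.range m, pathDistSum n a =
      m * ((m - 1) * (2 * m - 1) / 6 + (1 - n) * (m - 1) / 2 + (n ^ 2 - n) / 2) := by
    induction m with
    | zero => simp
    | succ m ih => rw [Finset.sum_range_succ, ih, pathDistSum]; push_cast; ring
  rw [hpartial]
  ring

theorem sum_range_pathPinvEntry {n : ℕ} (hn : n ≠ 0) {a : ℕ} (ha : a < n) :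
    ∑ b ∈ Finset.range n, pathPinvEntry n a b = 0 := by
  have hn' : (n : ℝ) ≠ 0 := by exact_mod_cast hn
  have hsplit (b : ℕ) : pathPinvEntry n a b = -(1 / 2) * |(a : ℝ) - b| +
      1 / (2 * n) * pathDistSum n b + (pathDistSum n a / (2 * n) - (n ^ 2 - 1) / (6 * n)) := by
    simp only [pathPinvEntry, Int.cast_natCast]
    ring
  simp only [hsplit, Finset.sum_add_distrib, ← Finset.mul_sum, Finset.sum_const, Finset.card_range,
    nsmul_eq_mul]
  rw [sum_range_abs_sub ha.le, sum_range_pathDistSum, pathDistSum]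
  field_simp
  ring

noncomputable def centeringMatrix (n : ℕ) : Matrix (Fin n) (Fin n) ℝ :=
  1 - (n : ℝ)⁻¹ • of fun _ _ => 1

theorem centeringMatrix_transpose (n : ℕ) : (centeringMatrix n)ᵀ = centeringMatrix n := by
  ext i j
  simp [centeringMatrix, one_apply, eq_comm]

theorem pathLaplacian_mul_pathPinv {n : ℕ} (hn : 2 ≤ n) :
    pathLaplacian n * pathPinv n = centeringMatrix n := by
  ext i k
  have hn₀ : n ≠ 0 := by omega
  rw [mul_apply]
  simp only [pathPinv, of_apply]
  rw [sum_pathLaplacian_mul hn (fun a => pathPinvEntry n a k)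
      (pathPinvEntry_neg_one_eq_zero hn₀ (by omega)) (pathPinvEntry_natCast_eq_sub_one hn₀ (by omega)),
    pathPinvEntry_second_diff]
  simp [centeringMatrix, one_apply, Fin.ext_iff]

theorem pathLaplacian_mul_centeringMatrix {n : ℕ} (hn : 2 ≤ n) :
    pathLaplacian n * centeringMatrix n = pathLaplacian n := by
  have hrow : pathLaplacian n * of (fun _ _ => 1) = 0 := by
    ext i j
    simpa [mul_apply] using (sum_pathLaplacian_mul hn (fun _ => 1) rfl rfl i).trans (by norm_num)
  rw [centeringMatrix, mul_sub, mul_one, Matrix.mul_smul, hrow, smul_zero, sub_zero]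

theorem pathPinv_mul_centeringMatrix {n : ℕ} (hn : n ≠ 0) :
    pathPinv n * centeringMatrix n = pathPinv n := by
  have hrow : pathPinv n * of (fun _ _ => 1) = 0 := by
    ext i j
    simpa [mul_apply, pathPinv, Fin.sum_univ_eq_sum_range (fun b => pathPinvEntry n i b)]
      using sum_range_pathPinvEntry hn i.isLt
  rw [centeringMatrix, mul_sub, mul_one, Matrix.mul_smul, hrow, smul_zero, sub_zero]

theorem pathPinv_isMoorePenroseInverse {n : ℕ} (hn : 2 ≤ n) :
    IsMoorePenroseInverse (pathLaplacian n) (pathPinv n) := by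
  have hLM := pathLaplacian_mul_pathPinv hn
  have hML : pathPinv n * pathLaplacian n = centeringMatrix n := by
    rw [← pathLaplacian_transpose, ← pathPinv_transpose, ← transpose_mul, hLM,
      centeringMatrix_transpose]
  have hEL : centeringMatrix n * pathLaplacian n = pathLaplacian n := by
    rw [← pathLaplacian_transpose, ← centeringMatrix_transpose, ← transpose_mul,
      pathLaplacian_mul_centeringMatrix hn]
  have hEM : centeringMatrix n * pathPinv n = pathPinv n := by
    rw [← pathPinv_transpose, ← centeringMatrix_transpose, ← transpose_mul,
      pathPinv_mul_centeringMatrix (by omega)]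
  refine isMoorePenroseInverse_of_transpose ?_ ?_ ?_ ?_
  · rw [hLM, hEL]
  · rw [hML, hEM]
  · rw [hLM, centeringMatrix_transpose]
  · rw [hML, centeringMatrix_transpose]

/-- Diagonal of the pseudoinverse of the path Laplacian. Let `L` be the Laplacian
of the path graph on `n ≥ 2` vertices `1, …, n` (vertex `j` corresponds to `j' : Fin n` with
`j = j'.val + 1`) and `Lp` its Moore–Penrose pseudoinverse. Then for every vertex `j`,
`L⁺ⱼⱼ = ((n−j)(n−j+1) + j(j−1))/(2n) − (n²−1)/(6n)`. -/
theorem stmt_18 {n : ℕ} (hn : 2 ≤ n)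
    (L Lp : Matrix (Fin n) (Fin n) ℝ)
    (hLdef : ∀ i j : Fin n, L i j =
      if i = j then (if i.val = 0 ∨ i.val = n - 1 then 1 else 2)
      else if i.val + 1 = j.val ∨ j.val + 1 = i.val then -1 else 0)
    (hp1 : L * Lp * L = L) (hp2 : Lp * L * Lp = Lp)
    (hp3 : (L * Lp)ᵀ = L * Lp) (hp4 : (Lp * L)ᵀ = Lp * L)
    (j' : Fin n) :
    Lp j' j' =
      (((n : ℝ) - ((j'.val : ℝ) + 1)) * ((n : ℝ) - ((j'.val : ℝ) + 1) + 1)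
          + ((j'.val : ℝ) + 1) * (((j'.val : ℝ) + 1) - 1)) / (2 * (n : ℝ))
        - ((n : ℝ) ^ 2 - 1) / (6 * (n : ℝ)) := by
  have hL : L = pathLaplacian n := Matrix.ext hLdef
  subst hL
  have hLp : Lp = pathPinv n :=
    (isMoorePenroseInverse_of_transpose hp1 hp2 hp3 hp4).unique
      (pathPinv_isMoorePenroseInverse hn)
  rw [hLp, pathPinv, of_apply, pathPinvEntry, pathDistSum, sub_self, abs_zero]
  push_cast
  ring
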